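/- arXiv:1709.02429 — 4 statements merged into one kernel-verified Lean document; each statement's English description precedes it below -/
import Mathlib

section
/- Let V ⊆ ℝⁿ be an (n−1)-dimensional linear subspace with unit normal u, let S : ℝⁿ → ℝⁿ be an invertible linear map, and let A ⊆ V be a Borel set. Then the (n−1)-dimensional Hausdorff measure satisfies |S(A)|_{n−1} = |det S| · ‖S^{-T}(u)‖ · |A|_{n−1}, where S^{-T} is the inverse transpose of S. -/
open MeasureTheory

section Aux

local notation "E" n => EuclideanSpace ℝ (Fin n)

/-- Determinant auxiliary lemma: the determinant of the map induced on a hyperplane,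
read through orthonormal bases, equals `|det S| * ‖S^{-T} u‖`. -/
theorem stmt4_det_aux {n m : ℕ} (hnm : n = m + 1)
    (V : Submodule ℝ (E n)) (hV : Module.finrank ℝ V = m)
    (u : E n) (hu : ‖u‖ = 1)
    (huV : ∀ v ∈ V, (inner ℝ u v : ℝ) = 0)
    (S : (E n) ≃ₗ[ℝ] (E n))
    (b : OrthonormalBasis (Fin m) ℝ V)
    (c : OrthonormalBasis (Fin m) ℝ (V.map (S : (E n) →ₗ[ℝ] (E n)))) :
    |LinearMap.det
      (((b.repr.symm.toLinearEquiv.trans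
          (S.submoduleMap V)).trans c.repr.toLinearEquiv) :
        (E m) →ₗ[ℝ] (E m))| =
      |LinearMap.det (S : (E n) →ₗ[ℝ] (E n))| *
        ‖(LinearMap.adjoint (S.symm : (E n) →ₗ[ℝ] (E n))) u‖ := by
  classical
  set a : E n := (LinearMap.adjoint (S.symm : (E n) →ₗ[ℝ] (E n))) u with hadef
  have key : ∀ y : E n, (inner ℝ a (S y) : ℝ) = inner ℝ u y := by
    intro y
    rw [hadef, LinearMap.adjoint_inner_left]
    simp
  have huu : (inner ℝ u u : ℝ) = 1 := by
    rw [real_inner_self_eq_norm_sq, hu]; norm_num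
  have haSu : (inner ℝ a (S u) : ℝ) = 1 := by rw [key, huu]
  have ha : a ≠ 0 := by
    intro h; rw [h] at haSu; simp at haSu
  have han : 0 < ‖a‖ := norm_pos_iff.mpr ha
  set w : E n := ‖a‖⁻¹ • a with hwdef
  have hwS : ∀ y : E n, (inner ℝ w (S y) : ℝ) = ‖a‖⁻¹ * inner ℝ u y := by
    intro y; rw [hwdef, real_inner_smul_left, key]
  have hwn : ‖w‖ = 1 := by
    rw [hwdef, norm_smul, norm_inv, norm_norm, inv_mul_cancel₀ han.ne']
  have hwW : ∀ x : E n, x ∈ V.map (S : (E n) →ₗ[ℝ] (E n)) → (inner ℝ w x : ℝ) = 0 := by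
    rintro x ⟨v, hv, rfl⟩
    rw [LinearEquiv.coe_coe, hwS, huV v hv, mul_zero]
  have hwSu : (inner ℝ w (S u) : ℝ) = ‖a‖⁻¹ := by
    rw [hwS u, huu, mul_one]
  -- orthonormal families
  set vB : Fin m ⊕ Unit → E n := Sum.elim (fun i => (b i : E n)) (fun _ => u) with hvB
  set vC : Fin m ⊕ Unit → E n := Sum.elim (fun i => (c i : E n)) (fun _ => w) with hvC
  have hb := b.orthonormal
  have hc := c.orthonormal
  rw [orthonormal_iff_ite] at hb hc
  have honB : Orthonormal ℝ vB := by
    rw [orthonormal_iff_ite]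
    rintro (i | i) (j | j)
    · have := hb i j
      rw [Submodule.coe_inner] at this
      simpa [hvB] using this
    · have h0 : (inner ℝ u (b i : E n) : ℝ) = 0 := huV _ (b i).2
      rw [real_inner_comm] at h0
      simpa [hvB] using h0
    · simpa [hvB] using huV _ (b j).2
    · simpa [hvB] using huu
  have honC : Orthonormal ℝ vC := by
    rw [orthonormal_iff_ite]
    rintro (i | i) (j | j)
    · have := hc i j
      rw [Submodule.coe_inner] at this
      simpa [hvC] using this
    · have h0 : (inner ℝ w (c i : E n) : ℝ) = 0 := hwW _ (c i).2
      rw [real_inner_comm] at h0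
      simpa [hvC] using h0
    · simpa [hvC] using hwW _ (c j).2
    · have : (inner ℝ w w : ℝ) = 1 := by
        rw [real_inner_self_eq_norm_sq, hwn]; norm_num
      simpa [hvC] using this
  have hcard : Fintype.card (Fin m ⊕ Unit) = Module.finrank ℝ (E n) := by
    simp [finrank_euclideanSpace_fin, hnm]
  let B : Module.Basis (Fin m ⊕ Unit) ℝ (E n) :=
    basisOfLinearIndependentOfCardEqFinrank honB.linearIndependent hcard
  have hBcoe : ⇑B = vB := coe_basisOfLinearIndependentOfCardEqFinrank _ _
  let C : Module.Basis (Fin m ⊕ Unit) ℝ (E n) :=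
    basisOfLinearIndependentOfCardEqFinrank honC.linearIndependent hcard
  have hCcoe : ⇑C = vC := coe_basisOfLinearIndependentOfCardEqFinrank _ _
  have honB' : Orthonormal ℝ ⇑B := hBcoe ▸ honB
  have honC' : Orthonormal ℝ ⇑C := hCcoe ▸ honC
  have habsCB : |C.det ⇑B| = 1 := by
    have h := (C.toOrthonormalBasis honC').det_to_matrix_orthonormalBasis
      (b := B.toOrthonormalBasis honB')
    rwa [Module.Basis.toBasis_toOrthonormalBasis, Module.Basis.coe_toOrthonormalBasis,
      Real.norm_eq_abs] at h
  have hrepr : ∀ (x : E n) (j : Fin m ⊕ Unit), C.repr x j = (inner ℝ (vC j) x : ℝ) := by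
    intro x j
    conv_lhs => rw [← Module.Basis.toBasis_toOrthonormalBasis C honC']
    rw [OrthonormalBasis.coe_toBasis_repr_apply, OrthonormalBasis.repr_apply_apply,
      Module.Basis.coe_toOrthonormalBasis, hCcoe]
  set N : Matrix (Fin m ⊕ Unit) (Fin m ⊕ Unit) ℝ := C.toMatrix (⇑S ∘ ⇑B) with hN
  have hNentry : ∀ jj ii, N jj ii = (inner ℝ (vC jj) (S (vB ii)) : ℝ) := by
    intro jj ii
    rw [hN, Module.Basis.toMatrix_apply, hrepr]
    simp [hBcoe]
  have hdet1 : N.det = LinearMap.det (S : (E n) →ₗ[ℝ] (E n)) * C.det ⇑B := by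
    rw [hN, ← Module.Basis.det_apply]
    have : ⇑S ∘ ⇑B = ⇑(S : (E n) →ₗ[ℝ] (E n)) ∘ ⇑B := rfl
    rw [this, Module.Basis.det_comp]
  have hz : N.toBlocks₂₁ = 0 := by
    ext j i
    have := hNentry (Sum.inr j) (Sum.inl i)
    simp only [Matrix.toBlocks₂₁, Matrix.of_apply, Matrix.zero_apply]
    rw [this]
    show (inner ℝ w (S (b i : E n)) : ℝ) = 0
    rw [hwS, huV _ (b i).2, mul_zero]
  have hblock : N.det = (N.toBlocks₁₁).det * ‖a‖⁻¹ := by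
    conv_lhs => rw [← Matrix.fromBlocks_toBlocks N]
    rw [hz, Matrix.det_fromBlocks_zero₂₁]
    congr 1
    rw [Matrix.det_unique]
    have := hNentry (Sum.inr ()) (Sum.inr ())
    simp only [Matrix.toBlocks₂₂, Matrix.of_apply]
    rw [this]
    show (inner ℝ w (S u) : ℝ) = ‖a‖⁻¹
    exact hwSu
  have hfdet : LinearMap.det
      (((b.repr.symm.toLinearEquiv.trans
          (S.submoduleMap V)).trans c.repr.toLinearEquiv) :
        (E m) →ₗ[ℝ] (E m)) = (N.toBlocks₁₁).det := by
    rw [← LinearMap.det_toMatrix (EuclideanSpace.basisFun (Fin m) ℝ).toBasis]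
    congr 1
    ext j i
    rw [LinearMap.toMatrix_apply]
    rw [OrthonormalBasis.coe_toBasis_repr_apply, EuclideanSpace.basisFun_repr]
    have hstd : (EuclideanSpace.basisFun (Fin m) ℝ).toBasis i
        = EuclideanSpace.single i 1 := by
      rw [OrthonormalBasis.coe_toBasis, EuclideanSpace.basisFun_apply]
    rw [hstd]
    simp only [LinearEquiv.coe_coe, LinearEquiv.trans_apply,
      LinearIsometryEquiv.coe_toLinearEquiv, OrthonormalBasis.repr_symm_single]
    rw [OrthonormalBasis.repr_apply_apply, Submodule.coe_inner]
    have h11 : N.toBlocks₁₁ j i = (inner ℝ (vC (Sum.inl j)) (S (vB (Sum.inl i))) : ℝ) := by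
      simp only [Matrix.toBlocks₁₁, Matrix.of_apply]
      exact hNentry (Sum.inl j) (Sum.inl i)
    rw [h11]
    show (inner ℝ ((c j : E n)) ((S.submoduleMap V (b i) : E n)) : ℝ)
        = (inner ℝ ((c j : E n)) (S (b i : E n)) : ℝ)
    rw [S.submoduleMap_apply]
  have hch : LinearMap.det (S : (E n) →ₗ[ℝ] (E n)) * C.det ⇑B
      = (N.toBlocks₁₁).det * ‖a‖⁻¹ := by rw [← hdet1, hblock]
  have habs := congrArg abs hch
  rw [abs_mul, abs_mul, habsCB, mul_one, abs_of_pos (inv_pos.mpr han)] at habs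
  rw [hfdet]
  rw [habs, mul_assoc, inv_mul_cancel₀ han.ne', mul_one]

end Aux

theorem stmt4 {n : ℕ} (hn : 1 ≤ n)
    (V : Submodule ℝ (EuclideanSpace ℝ (Fin n)))
    (hV : Module.finrank ℝ V = n - 1)
    (u : EuclideanSpace ℝ (Fin n)) (hu : ‖u‖ = 1)
    (huV : ∀ v ∈ V, (inner ℝ u v : ℝ) = 0)
    (S : EuclideanSpace ℝ (Fin n) ≃ₗ[ℝ] EuclideanSpace ℝ (Fin n))
    (A : Set (EuclideanSpace ℝ (Fin n))) (hA : A ⊆ (V : Set (EuclideanSpace ℝ (Fin n))))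
    (hAm : MeasurableSet A) :
    μH[(n:ℝ) - 1] (⇑S '' A) =
      ENNReal.ofReal (|LinearMap.det (S : EuclideanSpace ℝ (Fin n) →ₗ[ℝ] EuclideanSpace ℝ (Fin n))| *
        ‖(LinearMap.adjoint (S.symm : EuclideanSpace ℝ (Fin n) →ₗ[ℝ] EuclideanSpace ℝ (Fin n))) u‖) *
      μH[(n:ℝ) - 1] A := by
  set m := n - 1 with hm
  have hnm : n = m + 1 := (Nat.succ_pred_eq_of_pos hn).symm
  have hexp : (n : ℝ) - 1 = (m : ℝ) := by
    rw [hnm]; push_cast; ring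
  rw [hexp]
  have hm0 : (0:ℝ) ≤ (m:ℝ) := by positivity
  -- the image hyperplane
  set W : Submodule ℝ (EuclideanSpace ℝ (Fin n)) :=
    V.map (S : EuclideanSpace ℝ (Fin n) →ₗ[ℝ] EuclideanSpace ℝ (Fin n)) with hWdef
  have hV' : Module.finrank ℝ V = m := hV
  have hW : Module.finrank ℝ W = m := by
    rw [hWdef, LinearEquiv.finrank_map_eq S V, hV']
  -- orthonormal bases
  let b : OrthonormalBasis (Fin m) ℝ V :=
    (stdOrthonormalBasis ℝ V).reindex (finCongr hV')
  let c : OrthonormalBasis (Fin m) ℝ W :=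
    (stdOrthonormalBasis ℝ W).reindex (finCongr hW)
  -- linear maps
  let T : V ≃ₗ[ℝ] W := S.submoduleMap V
  let f : EuclideanSpace ℝ (Fin m) ≃ₗ[ℝ] EuclideanSpace ℝ (Fin m) :=
    (b.repr.symm.toLinearEquiv.trans T).trans c.repr.toLinearEquiv
  -- set decomposition
  set A₀ : Set V := ((↑) : V → EuclideanSpace ℝ (Fin n)) ⁻¹' A with hA₀def
  have hA₀ : (((↑) : V → EuclideanSpace ℝ (Fin n)) '' A₀) = A := by
    refine Set.image_preimage_eq_of_subset ?_
    rw [Subtype.range_val]; exact hA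
  have hisoV : Isometry ((↑) : V → EuclideanSpace ℝ (Fin n)) :=
    Isometry.of_dist_eq fun x y => rfl
  have hisoW : Isometry ((↑) : W → EuclideanSpace ℝ (Fin n)) :=
    Isometry.of_dist_eq fun x y => rfl
  -- measure of A
  have h1 : μH[(m:ℝ)] A = μH[(m:ℝ)] (⇑b.repr '' A₀) := by
    rw [b.repr.isometry.hausdorffMeasure_image (Or.inl hm0),
      ← hA₀, hisoV.hausdorffMeasure_image (Or.inl hm0)]
  -- image of A
  have himg : ⇑S '' A = ((↑) : W → EuclideanSpace ℝ (Fin n)) '' (⇑T '' A₀) := by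
    rw [← hA₀, ← Set.image_comp, ← Set.image_comp]
    refine Set.image_congr fun x _ => ?_
    exact (S.submoduleMap_apply V x).symm
  have h2 : μH[(m:ℝ)] (⇑S '' A) = μH[(m:ℝ)] (⇑f '' (⇑b.repr '' A₀)) := by
    rw [himg, hisoW.hausdorffMeasure_image (Or.inl hm0),
      ← c.repr.isometry.hausdorffMeasure_image (Or.inl hm0) (⇑T '' A₀),
      ← Set.image_comp, ← Set.image_comp]
    refine congrArg _ (Set.image_congr fun x _ => ?_)
    show c.repr (T x) = f (b.repr x)
    simp [f]
  -- Haar measure step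
  have hfr : ((Module.finrank ℝ (EuclideanSpace ℝ (Fin m)) : ℕ) : ℝ) = (m:ℝ) := by
    simp [finrank_euclideanSpace_fin]
  have hHaar : Measure.IsAddHaarMeasure (μH[(m:ℝ)] :
      Measure (EuclideanSpace ℝ (Fin m))) := by
    have := MeasureTheory.isAddHaarMeasure_hausdorffMeasure
      (E := EuclideanSpace ℝ (Fin m))
    rwa [hfr] at this
  have h3 : μH[(m:ℝ)] (⇑f '' (⇑b.repr '' A₀)) =
      ENNReal.ofReal |LinearMap.det (f : EuclideanSpace ℝ (Fin m) →ₗ[ℝ] EuclideanSpace ℝ (Fin m))| *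
        μH[(m:ℝ)] (⇑b.repr '' A₀) := by
    exact Measure.addHaar_image_linearMap (μ := μH[(m:ℝ)]) _ _
  rw [h2, h3, ← h1]
  congr 2
  exact stmt4_det_aux hnm V hV' u hu huV S b c
end

section
/- For the hexagon P(ε) = conv{±e₂, ±√(1−ε²)e₁ ± εe₂} ⊆ ℝ² with 0 < ε < 1, the polar body P(ε)° is the hexagon with vertex set {±(1/√(1−ε²))e₁, ±((1−ε)/√(1−ε²))e₁ ± e₂}. -/
open MeasureTheory

noncomputable def polar' (K : Set (EuclideanSpace ℝ (Fin 2))) : Set (EuclideanSpace ℝ (Fin 2)) :=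
  {y | ∀ x ∈ K, (inner ℝ x y : ℝ) ≤ 1}

private lemma inner2 (x y : EuclideanSpace ℝ (Fin 2)) :
    (inner ℝ x y : ℝ) = x 0 * y 0 + x 1 * y 1 := by
  simp [PiLp.inner_apply, Fin.sum_univ_two, RCLike.inner_apply]; ring

private lemma convex_half (x : EuclideanSpace ℝ (Fin 2)) :
    Convex ℝ {y : EuclideanSpace ℝ (Fin 2) | (inner ℝ x y : ℝ) ≤ 1} := by
  have : IsLinearMap ℝ (fun y : EuclideanSpace ℝ (Fin 2) => (inner ℝ x y : ℝ)) :=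
    ⟨fun a b => inner_add_right x a b, fun c a => real_inner_smul_right x a c⟩
  exact convex_halfSpace_le this 1

private lemma convex_half' (y : EuclideanSpace ℝ (Fin 2)) :
    Convex ℝ {x : EuclideanSpace ℝ (Fin 2) | (inner ℝ x y : ℝ) ≤ 1} := by
  have : IsLinearMap ℝ (fun x : EuclideanSpace ℝ (Fin 2) => (inner ℝ x y : ℝ)) :=
    ⟨fun a b => inner_add_left a b y, fun c a => real_inner_smul_left a y c⟩
  exact convex_halfSpace_le this 1

private lemma mv2 {α : Type*} (a b c d e f : α) : ![a,b,c,d,e,f] 2 = c := rfl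
private lemma mv3 {α : Type*} (a b c d e f : α) : ![a,b,c,d,e,f] 3 = d := rfl
private lemma mv4 {α : Type*} (a b c d e f : α) : ![a,b,c,d,e,f] 4 = e := rfl
private lemma mv5 {α : Type*} (a b c d e f : α) : ![a,b,c,d,e,f] 5 = f := rfl

set_option maxHeartbeats 1000000 in
theorem stmt12 (ε : ℝ) (hε0 : 0 < ε) (hε1 : ε < 1)
    (P : Set (EuclideanSpace ℝ (Fin 2)))
    (hP : P = convexHull ℝ
      ({!₂[0, 1], !₂[0, -1],
        !₂[Real.sqrt (1 - ε^2), ε], !₂[Real.sqrt (1 - ε^2), -ε],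
        !₂[-Real.sqrt (1 - ε^2), ε], !₂[-Real.sqrt (1 - ε^2), -ε]} :
        Set (EuclideanSpace ℝ (Fin 2)))) :
    polar' P = convexHull ℝ
      ({!₂[1 / Real.sqrt (1 - ε^2), 0], !₂[-(1 / Real.sqrt (1 - ε^2)), 0],
        !₂[(1 - ε) / Real.sqrt (1 - ε^2), 1], !₂[(1 - ε) / Real.sqrt (1 - ε^2), -1],
        !₂[-((1 - ε) / Real.sqrt (1 - ε^2)), 1], !₂[-((1 - ε) / Real.sqrt (1 - ε^2)), -1]} :
        Set (EuclideanSpace ℝ (Fin 2))) := by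
  subst hP
  have h1ε : (0:ℝ) < 1 - ε^2 := by nlinarith
  set s := Real.sqrt (1 - ε^2) with hsdef
  have hs2 : s^2 = 1 - ε^2 := Real.sq_sqrt h1ε.le
  have hs : 0 < s := Real.sqrt_pos.mpr h1ε
  have hss : s * (1/s) = 1 := mul_one_div_cancel hs.ne'
  have hsd : s * ((1-ε)/s) = 1 - ε := by field_simp
  ext y
  constructor
  · intro hy
    have key : ∀ x ∈ ({!₂[0, 1], !₂[0, -1], !₂[s, ε], !₂[s, -ε], !₂[-s, ε], !₂[-s, -ε]} :
        Set (EuclideanSpace ℝ (Fin 2))), (inner ℝ x y : ℝ) ≤ 1 :=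
      fun x hx => hy x (subset_convexHull ℝ _ hx)
    set u := y 0 with hu
    set v := y 1 with hv
    have e1 : v ≤ 1 := by
      have := key !₂[0,1] (by simp); rw [inner2] at this
      simpa using this
    have e2 : -v ≤ 1 := by
      have := key !₂[0,-1] (by simp); rw [inner2] at this
      simp only [PiLp.toLp_apply, Matrix.cons_val_zero, Matrix.cons_val_one, Matrix.head_cons] at this
      linarith
    have e3 : s*u + ε*v ≤ 1 := by
      have := key !₂[s,ε] (by simp); rw [inner2] at this
      simp only [PiLp.toLp_apply, Matrix.cons_val_zero, Matrix.cons_val_one, Matrix.head_cons] at this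
      linarith
    have e4 : s*u - ε*v ≤ 1 := by
      have := key !₂[s,-ε] (by simp); rw [inner2] at this
      simp only [PiLp.toLp_apply, Matrix.cons_val_zero, Matrix.cons_val_one, Matrix.head_cons] at this
      linarith
    have e5 : -(s*u) + ε*v ≤ 1 := by
      have := key !₂[-s,ε] (by simp); rw [inner2] at this
      simp only [PiLp.toLp_apply, Matrix.cons_val_zero, Matrix.cons_val_one, Matrix.head_cons] at this
      linarith
    have e6 : -(s*u) - ε*v ≤ 1 := by
      have := key !₂[-s,-ε] (by simp); rw [inner2] at this
      simp only [PiLp.toLp_apply, Matrix.cons_val_zero, Matrix.cons_val_one, Matrix.head_cons] at this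
      linarith
    -- build the convex combination
    set a := |v| with ha
    have hva : v ≤ a := le_abs_self v
    have hva' : -v ≤ a := neg_le_abs v
    have ha1 : a ≤ 1 := abs_le.mpr ⟨by linarith, e1⟩
    have ha0 : 0 ≤ a := abs_nonneg v
    set D := 1 - ε*a with hD
    have hD0 : 0 < D := by nlinarith
    have hsua : s*u + ε*a ≤ 1 := by
      rcases abs_cases v with ⟨h,_⟩ | ⟨h,_⟩ <;> rw [ha, h] <;> linarith
    have hsua' : -(s*u) + ε*a ≤ 1 := by
      rcases abs_cases v with ⟨h,_⟩ | ⟨h,_⟩ <;> rw [ha, h] <;> linarith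
    set t := s*u/D with htdef
    have htD : t * D = s * u := div_mul_cancel₀ _ hD0.ne'
    have ht1 : t ≤ 1 := (div_le_one hD0).mpr (by linarith)
    have ht2 : -1 ≤ t := by
      rw [htdef, le_div_iff₀ hD0]; linarith
    set p := (a+v)/2 with hp
    set n := (a-v)/2 with hn
    have hp0 : 0 ≤ p := by rw [hp]; linarith
    have hn0 : 0 ≤ n := by rw [hn]; linarith
    set w : Fin 6 → ℝ := ![(1-a)*(1+t)/2, (1-a)*(1-t)/2, p*(1+t)/2, n*(1+t)/2,
      p*(1-t)/2, n*(1-t)/2] with hw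
    set z : Fin 6 → EuclideanSpace ℝ (Fin 2) := ![!₂[1/s, 0], !₂[-(1/s), 0],
      !₂[(1-ε)/s, 1], !₂[(1-ε)/s, -1], !₂[-((1-ε)/s), 1], !₂[-((1-ε)/s), -1]] with hz
    have hw0 : w 0 = (1-a)*(1+t)/2 := rfl
    have hw1 : w 1 = (1-a)*(1-t)/2 := rfl
    have hw2 : w 2 = p*(1+t)/2 := rfl
    have hw3 : w 3 = n*(1+t)/2 := rfl
    have hw4 : w 4 = p*(1-t)/2 := rfl
    have hw5 : w 5 = n*(1-t)/2 := rfl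
    have hwnn : ∀ i ∈ Finset.univ, 0 ≤ w i := by
      intro i _
      fin_cases i
      · show (0:ℝ) ≤ (1-a)*(1+t)/2
        exact div_nonneg (mul_nonneg (by linarith) (by linarith)) zero_le_two
      · show (0:ℝ) ≤ (1-a)*(1-t)/2
        exact div_nonneg (mul_nonneg (by linarith) (by linarith)) zero_le_two
      · show (0:ℝ) ≤ p*(1+t)/2
        exact div_nonneg (mul_nonneg (by linarith) (by linarith)) zero_le_two
      · show (0:ℝ) ≤ n*(1+t)/2
        exact div_nonneg (mul_nonneg (by linarith) (by linarith)) zero_le_two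
      · show (0:ℝ) ≤ p*(1-t)/2
        exact div_nonneg (mul_nonneg (by linarith) (by linarith)) zero_le_two
      · show (0:ℝ) ≤ n*(1-t)/2
        exact div_nonneg (mul_nonneg (by linarith) (by linarith)) zero_le_two
    have hwsum : ∑ i, w i = 1 := by
      rw [Fin.sum_univ_six, hw0, hw1, hw2, hw3, hw4, hw5, hp, hn]; ring
    have hzmem : ∀ i ∈ Finset.univ, z i ∈ ({!₂[1/s, 0], !₂[-(1/s), 0],
        !₂[(1-ε)/s, 1], !₂[(1-ε)/s, -1], !₂[-((1-ε)/s), 1], !₂[-((1-ε)/s), -1]} :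
        Set (EuclideanSpace ℝ (Fin 2))) := by
      intro i _
      fin_cases i
      · exact Set.mem_insert_iff.mpr (Or.inl rfl)
      · exact Set.mem_insert_iff.mpr (Or.inr (Set.mem_insert_iff.mpr (Or.inl rfl)))
      · exact Set.mem_insert_iff.mpr (Or.inr (Set.mem_insert_iff.mpr (Or.inr
          (Set.mem_insert_iff.mpr (Or.inl rfl)))))
      · exact Set.mem_insert_iff.mpr (Or.inr (Set.mem_insert_iff.mpr (Or.inr
          (Set.mem_insert_iff.mpr (Or.inr (Set.mem_insert_iff.mpr (Or.inl rfl)))))))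
      · exact Set.mem_insert_iff.mpr (Or.inr (Set.mem_insert_iff.mpr (Or.inr
          (Set.mem_insert_iff.mpr (Or.inr (Set.mem_insert_iff.mpr (Or.inr
          (Set.mem_insert_iff.mpr (Or.inl rfl)))))))))
      · exact Set.mem_insert_iff.mpr (Or.inr (Set.mem_insert_iff.mpr (Or.inr
          (Set.mem_insert_iff.mpr (Or.inr (Set.mem_insert_iff.mpr (Or.inr
          (Set.mem_insert_iff.mpr (Or.inr (Set.mem_singleton_iff.mpr rfl))))))))))
    have hcm := Finset.centerMass_mem_convexHull Finset.univ hwnn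
      (by rw [hwsum]; norm_num) hzmem
    rw [Finset.centerMass_eq_of_sum_1 _ _ hwsum] at hcm
    have happ : ∀ i : Fin 2, (∑ j, w j • z j) i = ∑ j, w j * z j i := by
      intro i
      simp [Fin.sum_univ_six, PiLp.add_apply, PiLp.smul_apply]
    have hz00 : z 0 0 = 1/s := rfl
    have hz01 : z 0 1 = 0 := rfl
    have hz10 : z 1 0 = -(1/s) := rfl
    have hz11 : z 1 1 = 0 := rfl
    have hz20 : z 2 0 = (1-ε)/s := rfl
    have hz21 : z 2 1 = 1 := rfl
    have hz30 : z 3 0 = (1-ε)/s := rfl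
    have hz31 : z 3 1 = -1 := rfl
    have hz40 : z 4 0 = -((1-ε)/s) := rfl
    have hz41 : z 4 1 = 1 := rfl
    have hz50 : z 5 0 = -((1-ε)/s) := rfl
    have hz51 : z 5 1 = -1 := rfl
    have hc0 : (∑ j, w j • z j) 0 = u := by
      rw [happ 0, Fin.sum_univ_six, hw0, hw1, hw2, hw3, hw4, hw5,
        hz00, hz10, hz20, hz30, hz40, hz50, hp, hn]
      have expand : (1-a)*(1+t)/2 * (1/s) + (1-a)*(1-t)/2 * -(1/s)
          + (a+v)/2*(1+t)/2 * ((1-ε)/s) + (a-v)/2*(1+t)/2 * ((1-ε)/s)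
          + (a+v)/2*(1-t)/2 * -((1-ε)/s) + (a-v)/2*(1-t)/2 * -((1-ε)/s)
          = t * (1 - ε*a) / s := by ring
      rw [expand, ← hD, htD]
      exact mul_div_cancel_left₀ u hs.ne'
    have hc1 : (∑ j, w j • z j) 1 = v := by
      rw [happ 1, Fin.sum_univ_six, hw0, hw1, hw2, hw3, hw4, hw5,
        hz01, hz11, hz21, hz31, hz41, hz51, hp, hn]
      ring
    have hyeq : y = ∑ j, w j • z j := by
      ext i
      fin_cases i
      · exact hc0.symm
      · exact hc1.symm
    rw [hyeq]
    exact hcm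
  · intro hy x hx
    refine convexHull_min ?_ (convex_half' y) hx
    intro q hq
    simp only [Set.mem_insert_iff, Set.mem_singleton_iff] at hq
    have main : ∀ q' : EuclideanSpace ℝ (Fin 2),
        (∀ r ∈ ({!₂[1/s, 0], !₂[-(1/s), 0], !₂[(1-ε)/s, 1], !₂[(1-ε)/s, -1],
          !₂[-((1-ε)/s), 1], !₂[-((1-ε)/s), -1]} : Set (EuclideanSpace ℝ (Fin 2))),
          (inner ℝ q' r : ℝ) ≤ 1) → (inner ℝ q' y : ℝ) ≤ 1 := by
      intro q' hr
      exact convexHull_min hr (convex_half q') hy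
    rcases hq with rfl|rfl|rfl|rfl|rfl|rfl
    all_goals
      apply main
      intro r hr
      simp only [Set.mem_insert_iff, Set.mem_singleton_iff] at hr
      rcases hr with rfl|rfl|rfl|rfl|rfl|rfl <;>
        (rw [inner2];
         simp only [PiLp.toLp_apply, Matrix.cons_val_zero, Matrix.cons_val_one, Matrix.head_cons];
         linarith [hss, hsd, hε0.le, hε1.le])
end

section
/- For the hexagon P(ε) = conv{±e₂, ±√(1−ε²)e₁ ± εe₂} ⊆ ℝ² with 0 < ε < 1, the area of the polar body is |P(ε)°|₂ = (4−2ε)/√(1−ε²). -/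
open MeasureTheory

lemma inner_calc (a b : ℝ) (y : EuclideanSpace ℝ (Fin 2)) :
    (inner (𝕜 := ℝ) (E := EuclideanSpace ℝ (Fin 2)) !₂[a, b] y) = a * y 0 + b * y 1 := by
  simp [PiLp.inner_apply, Fin.sum_univ_two, RCLike.inner_apply]; ring

theorem stmt13 (ε : ℝ) (hε0 : 0 < ε) (hε1 : ε < 1)
    (P : Set (EuclideanSpace ℝ (Fin 2)))
    (hP : P = convexHull ℝ
      ({!₂[0, 1], !₂[0, -1],
        !₂[Real.sqrt (1 - ε^2), ε], !₂[Real.sqrt (1 - ε^2), -ε],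
        !₂[-Real.sqrt (1 - ε^2), ε], !₂[-Real.sqrt (1 - ε^2), -ε]} :
        Set (EuclideanSpace ℝ (Fin 2)))) :
    volume (polar' P) = ENNReal.ofReal ((4 - 2 * ε) / Real.sqrt (1 - ε^2)) := by
  subst hP
  set s := Real.sqrt (1 - ε ^ 2) with hsdef
  have hs : 0 < s := Real.sqrt_pos.mpr (by nlinarith)
  set T : Set (ℝ × ℝ) :=
    {p | p.1 ∈ Set.Icc (-1 : ℝ) 1 ∧
      p.2 ∈ Set.Icc (-((1 - ε * |p.1|) / s)) ((1 - ε * |p.1|) / s)} with hTdef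
  have hTmeas : MeasurableSet T := by
    have h1 : Measurable fun p : ℝ × ℝ => (1 - ε * |p.1|) / s := by fun_prop
    exact ((measurable_fst measurableSet_Icc)).inter
      ((measurableSet_le h1.neg measurable_snd).inter (measurableSet_le measurable_snd h1))
  -- the preimage identity
  have hset : polar' (convexHull ℝ
      ({!₂[0, 1], !₂[0, -1], !₂[s, ε], !₂[s, -ε], !₂[-s, ε], !₂[-s, -ε]} :
        Set (EuclideanSpace ℝ (Fin 2)))) =
      (fun y : EuclideanSpace ℝ (Fin 2) => (y 1, y 0)) ⁻¹' T := by
    ext y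
    simp only [Set.mem_preimage, hTdef, Set.mem_setOf_eq, Set.mem_Icc]
    constructor
    · intro hy
      have sub := subset_convexHull ℝ
        ({!₂[0, 1], !₂[0, -1], !₂[s, ε], !₂[s, -ε], !₂[-s, ε], !₂[-s, -ε]} :
          Set (EuclideanSpace ℝ (Fin 2)))
      have e1 := hy !₂[0, 1] (sub (by simp))
      have e2 := hy !₂[0, -1] (sub (by simp))
      have e3 := hy !₂[s, ε] (sub (by simp))
      have e4 := hy !₂[s, -ε] (sub (by simp))
      have e5 := hy !₂[-s, ε] (sub (by simp))
      have e6 := hy !₂[-s, -ε] (sub (by simp))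
      rw [inner_calc] at e1 e2 e3 e4 e5 e6
      refine ⟨⟨by linarith, by linarith⟩, ?_, ?_⟩
      · rw [← neg_div, div_le_iff₀ hs]
        rcases abs_cases (y 1) with ⟨h, _⟩ | ⟨h, _⟩ <;> rw [h] <;> nlinarith
      · rw [le_div_iff₀ hs]
        rcases abs_cases (y 1) with ⟨h, _⟩ | ⟨h, _⟩ <;> rw [h] <;> nlinarith
    · rintro ⟨⟨hb1, hb2⟩, ha1, ha2⟩
      rw [← neg_div, div_le_iff₀ hs] at ha1
      rw [le_div_iff₀ hs] at ha2
      intro x hx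
      have hconv : Convex ℝ {x : EuclideanSpace ℝ (Fin 2) | (inner ℝ x y : ℝ) ≤ 1} :=
        convex_halfSpace_le
          ⟨fun u v => inner_add_left u v y, fun c u => real_inner_smul_left u y c⟩ 1
      refine convexHull_min ?_ hconv hx
      intro v hv
      simp only [Set.mem_insert_iff, Set.mem_singleton_iff] at hv
      rcases abs_cases (y 1) with ⟨h, _⟩ | ⟨h, _⟩ <;> rw [h] at ha1 ha2 <;>
        rcases hv with rfl | rfl | rfl | rfl | rfl | rfl <;>
        simp only [Set.mem_setOf_eq, inner_calc] <;> nlinarith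
  rw [hset]
  -- measure preservation
  have hF : MeasurePreserving (fun y : EuclideanSpace ℝ (Fin 2) => (y 1, y 0))
      volume volume := by
    have m1 := EuclideanSpace.volume_preserving_symm_measurableEquiv_toLp (ι := Fin 2)
    have m2 := volume_preserving_piFinTwo (fun _ : Fin 2 => ℝ)
    have m3 : MeasurePreserving (Prod.swap : ℝ × ℝ → ℝ × ℝ) volume volume := by
      rw [show (volume : Measure (ℝ × ℝ)) = (volume : Measure ℝ).prod volume from rfl]
      exact Measure.measurePreserving_swap
    exact (m3.comp m2).comp m1
  rw [hF.measure_preimage hTmeas.nullMeasurableSet]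
  -- Fubini
  have hprod : (volume : Measure (ℝ × ℝ)) = (volume : Measure ℝ).prod volume := rfl
  rw [hprod, Measure.prod_apply hTmeas]
  have hslice : ∀ b : ℝ, volume (Prod.mk b ⁻¹' T) =
      Set.indicator (Set.Icc (-1 : ℝ) 1)
        (fun b => ENNReal.ofReal (2 * ((1 - ε * |b|) / s))) b := by
    intro b
    by_cases hb : b ∈ Set.Icc (-1 : ℝ) 1
    · have : Prod.mk b ⁻¹' T = Set.Icc (-((1 - ε * |b|) / s)) ((1 - ε * |b|) / s) := by
        ext a
        simp only [Set.mem_preimage, hTdef, Set.mem_setOf_eq, Set.mem_Icc] at *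
        exact ⟨fun h => h.2, fun h => ⟨hb, h⟩⟩
      rw [this, Real.volume_Icc, Set.indicator_of_mem hb]
      congr 1
      ring
    · have : Prod.mk b ⁻¹' T = ∅ := by
        ext a
        simp only [Set.mem_preimage, hTdef, Set.mem_setOf_eq, Set.mem_empty_iff_false,
          iff_false]
        intro h
        exact hb h.1
      rw [this, Set.indicator_of_notMem hb, measure_empty]
  rw [lintegral_congr hslice, lintegral_indicator measurableSet_Icc]
  have hnn : 0 ≤ᵐ[volume.restrict (Set.Icc (-1 : ℝ) 1)]
      fun b => 2 * ((1 - ε * |b|) / s) := by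
    filter_upwards [ae_restrict_mem measurableSet_Icc] with b hb
    have : |b| ≤ 1 := abs_le.mpr ⟨hb.1, hb.2⟩
    have h2 : ε * |b| ≤ 1 := by nlinarith [abs_nonneg b]
    have h3 : 0 ≤ (1 - ε * |b|) / s := div_nonneg (by linarith) hs.le
    simp only [Pi.zero_apply]
    linarith
  have hint : IntegrableOn (fun b : ℝ => 2 * ((1 - ε * |b|) / s))
      (Set.Icc (-1 : ℝ) 1) volume := by
    apply Continuous.integrableOn_Icc
    fun_prop
  rw [← ofReal_integral_eq_lintegral_ofReal hint hnn]
  congr 1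
  have habs : (∫ x in (-1 : ℝ)..1, |x|) = 1 := by
    have h1 : (∫ x in (-1 : ℝ)..0, |x|) = 1 / 2 := by
      rw [intervalIntegral.integral_congr (g := fun x => -x) ?_]
      · rw [intervalIntegral.integral_neg, integral_id]; norm_num
      · intro x hx
        rw [Set.uIcc_of_le (by norm_num : (-1 : ℝ) ≤ 0)] at hx
        exact abs_of_nonpos hx.2
    have h2 : (∫ x in (0 : ℝ)..1, |x|) = 1 / 2 := by
      rw [intervalIntegral.integral_congr (g := fun x => x) ?_]
      · rw [integral_id]; norm_num
      · intro x hx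
        rw [Set.uIcc_of_le (by norm_num : (0 : ℝ) ≤ 1)] at hx
        exact abs_of_nonneg hx.1
    have := intervalIntegral.integral_add_adjacent_intervals
      (a := (-1 : ℝ)) (b := 0) (c := 1) (f := fun x => |x|)
      (continuous_abs.intervalIntegrable (μ := volume) _ _)
      (continuous_abs.intervalIntegrable (μ := volume) _ _)
    rw [h1, h2] at this
    linarith
  rw [MeasureTheory.integral_Icc_eq_integral_Ioc,
    ← intervalIntegral.integral_of_le (by norm_num : (-1 : ℝ) ≤ 1)]
  have hfun : (fun b : ℝ => 2 * ((1 - ε * |b|) / s)) =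
      fun b : ℝ => 2 / s - 2 * ε / s * |b| := by
    funext b; field_simp
  rw [hfun, intervalIntegral.integral_sub (f := fun _ => 2 / s) (g := fun b : ℝ => 2 * ε / s * |b|) (intervalIntegrable_const)
    ((continuous_const.mul continuous_abs : Continuous (fun b : ℝ => 2 * ε / s * |b|)).intervalIntegrable _ _),
    intervalIntegral.integral_const_mul, habs, intervalIntegral.integral_const]
  have : ((1 : ℝ) - (-1)) • (2 / s) - 2 * ε / s * 1 = (4 - 2 * ε) / s := by
    field_simp; ring_nf; rw [mul_inv_cancel₀ hs.ne']; ring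
  rw [this]
end

section
/- For the hexagon P(ε) with 0 < ε < 1/2, the invariant G(P(ε)) := min_{c ≥ 0} max over the two vertex classes of (α_i − c·β_i, c·β) equals 2√2·(1+ε)^{1/2}(1−ε)^{3/2}/(3−2ε), where for the vertex class ξ = ±e₂: α₁ = √2·√(1−ε²), β₁ = (4−2ε)/(1−ε); for the class ξ = ±√(1−ε²)e₁ ± εe₂: α₂ = (1+ε)^{1/2}, β₂ = 8−4ε; and β = max(β₁,β₂) = 8−4ε. -/
theorem stmt19 (ε : ℝ) (hε0 : 0 < ε) (hε2 : ε < 1 / 2)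
    (α₁ β₁ α₂ β₂ β : ℝ)
    (hα₁ : α₁ = Real.sqrt 2 * Real.sqrt (1 - ε^2))
    (hβ₁ : β₁ = (4 - 2 * ε) / (1 - ε))
    (hα₂ : α₂ = Real.sqrt (1 + ε))
    (hβ₂ : β₂ = 8 - 4 * ε)
    (hβ : β = max β₁ β₂) :
    β = 8 - 4 * ε ∧
    sInf {x : ℝ | ∃ c ≥ (0:ℝ), x = max (max (α₁ - c * β₁) (α₂ - c * β₂)) (c * β)} =
      2 * Real.sqrt 2 * (1 + ε) ^ ((1:ℝ) / 2) * (1 - ε) ^ ((3:ℝ) / 2) / (3 - 2 * ε) := by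
  have h1 : (0:ℝ) < 1 - ε := by linarith
  have h1' : (0:ℝ) < 1 + ε := by linarith
  have hβ₁pos : 0 < β₁ := by rw [hβ₁]; apply div_pos <;> linarith
  have hβ₂pos : 0 < β₂ := by rw [hβ₂]; linarith
  have hβ₁le : β₁ ≤ β₂ := by
    rw [hβ₁, hβ₂, div_le_iff₀ h1]; nlinarith
  have hβeq : β = 8 - 4 * ε := by
    rw [hβ, max_eq_right hβ₁le, hβ₂]
  have hββ₂ : β = β₂ := by rw [hβeq, hβ₂]
  have hsumpos : 0 < β₁ + β₂ := by linarith
  have hα₂le : α₂ ≤ α₁ := by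
    rw [hα₁, hα₂, ← Real.sqrt_mul (by norm_num : (0:ℝ) ≤ 2)]
    apply Real.sqrt_le_sqrt; nlinarith
  have hα₁pos : 0 < α₁ := by
    rw [hα₁]
    exact mul_pos (Real.sqrt_pos.mpr (by norm_num)) (Real.sqrt_pos.mpr (by nlinarith))
  set c₀ := α₁ / (β₁ + β₂) with hc₀
  have hc₀pos : 0 < c₀ := div_pos hα₁pos hsumpos
  set T := α₁ * β₂ / (β₁ + β₂) with hT
  have hTc : c₀ * β₂ = T := by rw [hc₀, hT]; ring
  have hTa : α₁ - c₀ * β₁ = T := by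
    rw [hc₀, hT]; field_simp; ring
  -- the target value equals T
  have htarget :
      2 * Real.sqrt 2 * (1 + ε) ^ ((1:ℝ) / 2) * (1 - ε) ^ ((3:ℝ) / 2) / (3 - 2 * ε) = T := by
    have hr1 : (1 + ε) ^ ((1:ℝ) / 2) = Real.sqrt (1 + ε) := (Real.sqrt_eq_rpow _).symm
    have hr2 : (1 - ε) ^ ((3:ℝ) / 2) = (1 - ε) * Real.sqrt (1 - ε) := by
      have h32 : ((3:ℝ) / 2) = 1 + 1 / 2 := by norm_num
      rw [h32, Real.rpow_add h1, Real.rpow_one, ← Real.sqrt_eq_rpow]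
    have hfac : Real.sqrt (1 - ε ^ 2) = Real.sqrt (1 - ε) * Real.sqrt (1 + ε) := by
      rw [← Real.sqrt_mul h1.le]; ring_nf
    have h3 : (0:ℝ) < 3 - 2 * ε := by linarith
    have hd : (4 - 2 * ε) / (1 - ε) + (8 - 4 * ε) ≠ 0 := by
      rw [← hβ₁, ← hβ₂]; exact hsumpos.ne'
    rw [hr1, hr2, hT, hα₁, hβ₁, hβ₂, hfac]
    rw [div_eq_div_iff h3.ne' hd, div_add' _ _ _ h1.ne', ← mul_div_assoc,
      div_eq_iff h1.ne']
    ring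
  refine ⟨hβeq, ?_⟩
  have hmem : T ∈ {x : ℝ | ∃ c ≥ (0:ℝ), x = max (max (α₁ - c * β₁) (α₂ - c * β₂)) (c * β)} := by
    refine ⟨c₀, hc₀pos.le, ?_⟩
    have h2 : α₂ - c₀ * β₂ ≤ α₁ - c₀ * β₁ := by
      have := mul_le_mul_of_nonneg_left hβ₁le hc₀pos.le
      linarith
    rw [hββ₂, max_eq_left h2, hTa, hTc, max_self]
  have hlb : ∀ x ∈ {x : ℝ | ∃ c ≥ (0:ℝ), x = max (max (α₁ - c * β₁) (α₂ - c * β₂)) (c * β)},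
      T ≤ x := by
    rintro x ⟨c, hc, rfl⟩
    rcases le_total c₀ c with h | h
    · calc T = c₀ * β₂ := hTc.symm
        _ ≤ c * β₂ := mul_le_mul_of_nonneg_right h hβ₂pos.le
        _ = c * β := by rw [hββ₂]
        _ ≤ _ := le_max_right _ _
    · calc T = α₁ - c₀ * β₁ := hTa.symm
        _ ≤ α₁ - c * β₁ := by nlinarith
        _ ≤ max (α₁ - c * β₁) (α₂ - c * β₂) := le_max_left _ _
        _ ≤ _ := le_max_left _ _
  rw [htarget]
  exact csInf_eq_of_forall_ge_of_forall_gt_exists_lt ⟨T, hmem⟩ hlb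
    (fun w hw => ⟨T, hmem, hw⟩)
end
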